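/- arXiv:1107.2133 — 5 statements merged into one kernel-verified Lean document; each statement's English description precedes it below -/
import Mathlib

section
/- Let S and T be operator systems and φ : S → T a linear map. Then φ is k-positive if and only if its Banach-space adjoint φᵈ : Tᵈ → Sᵈ is k-positive with respect to the dual matrix orderings. -/
open scoped ComplexOrder TensorProduct

noncomputable section

/-- A family of matrix cones over `V`, one in each matrix level `Mₙ(V)`. -/
def ConeFam (V : Type*) : Type _ :=
  ∀ n : ℕ, Set (Matrix (Fin n) (Fin n) V)

/-- Entrywise application of a linear map to a matrix (the `n`-th amplification). -/
def mmap {V W : Type*} [AddCommGroup V] [Module ℂ V] [AddCommGroup W] [Module ℂ W]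
    {n : ℕ} (φ : V →ₗ[ℂ] W) (M : Matrix (Fin n) (Fin n) V) : Matrix (Fin n) (Fin n) W :=
  M.map fun v => φ v

/-- Scalar congruence `A⋆ M A` of a `V`-valued matrix by a scalar matrix. -/
def matCongr {V : Type*} [AddCommGroup V] [Module ℂ V] {m n : ℕ}
    (A : Matrix (Fin m) (Fin n) ℂ) (M : Matrix (Fin m) (Fin m) V) :
    Matrix (Fin n) (Fin n) V :=
  Matrix.of fun i j => ∑ k, ∑ l, (star (A k i) * A l j) • M k l

/-- The diagonal matrix with constant diagonal entry `e`. -/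
def unitMat {V : Type*} [AddCommGroup V] [Module ℂ V] (e : V) (n : ℕ) :
    Matrix (Fin n) (Fin n) V :=
  Matrix.of fun i j => if i = j then e else 0

/-- An abstract operator system: a matrix ordered `*`-vector space together with an
Archimedean matrix order unit (Choi–Effros axioms). -/
structure OSStruct (V : Type*) [AddCommGroup V] [Module ℂ V]
    [StarAddMonoid V] [StarModule ℂ V] where
  pos : ConeFam V
  unit : V
  unit_sa : star unit = unit
  pos_sa : ∀ {n : ℕ} {M : Matrix (Fin n) (Fin n) V}, M ∈ pos n → M.conjTranspose = M
  pos_add : ∀ {n : ℕ} {M N : Matrix (Fin n) (Fin n) V}, M ∈ pos n → N ∈ pos n → M + N ∈ pos n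
  pos_smul : ∀ {n : ℕ} (r : ℝ) {M : Matrix (Fin n) (Fin n) V},
      0 ≤ r → M ∈ pos n → (r : ℂ) • M ∈ pos n
  pos_strict : ∀ {n : ℕ} {M : Matrix (Fin n) (Fin n) V}, M ∈ pos n → -M ∈ pos n → M = 0
  pos_congr : ∀ {m n : ℕ} (A : Matrix (Fin m) (Fin n) ℂ) {M : Matrix (Fin m) (Fin m) V},
      M ∈ pos m → matCongr A M ∈ pos n
  unit_pos : ∀ n, unitMat unit n ∈ pos n
  orderUnit : ∀ {n : ℕ} (M : Matrix (Fin n) (Fin n) V), M.conjTranspose = M →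
      ∃ r : ℝ, 0 < r ∧ (r : ℂ) • unitMat unit n + M ∈ pos n
  archimedean : ∀ {n : ℕ} (M : Matrix (Fin n) (Fin n) V),
      (∀ ε : ℝ, 0 < ε → (ε : ℂ) • unitMat unit n + M ∈ pos n) → M ∈ pos n

section Maps
variable {V W : Type*} [AddCommGroup V] [Module ℂ V] [AddCommGroup W] [Module ℂ W]

/-- `k`-positivity of a linear map with respect to given matrix cone families. -/
def osKPos (C : ConeFam V) (D : ConeFam W) (k : ℕ) (φ : V →ₗ[ℂ] W) : Prop :=
  ∀ M ∈ C k, mmap φ M ∈ D k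

/-- Complete positivity. -/
def osCP (C : ConeFam V) (D : ConeFam W) (φ : V →ₗ[ℂ] W) : Prop :=
  ∀ k, osKPos C D k φ

/-- Unital complete positivity. -/
def osUCP (C : ConeFam V) (e : V) (D : ConeFam W) (f : W) (φ : V →ₗ[ℂ] W) : Prop :=
  osCP C D φ ∧ φ e = f

/-- Complete order embedding. -/
def osCOEmbedding (C : ConeFam V) (D : ConeFam W) (φ : V →ₗ[ℂ] W) : Prop :=
  Function.Injective φ ∧ osCP C D φ ∧
    ∀ (n : ℕ) (M : Matrix (Fin n) (Fin n) V), mmap φ M ∈ D n → M ∈ C n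

/-- Operator system quotient map: a surjective completely positive map such that the
induced map on the quotient by its kernel is a complete order isomorphism, expressed
via the standard `ε`-lifting characterisation of positive matrices. -/
def osQuotientMap (C : ConeFam V) (D : ConeFam W) (f : W) (φ : V →ₗ[ℂ] W) : Prop :=
  Function.Surjective φ ∧ osCP C D φ ∧
    ∀ (n : ℕ), ∀ N ∈ D n, ∀ ε : ℝ, 0 < ε →
      ∃ M ∈ C n, mmap φ M = N + (ε : ℂ) • unitMat f n

/-- Positivity of a single element (as a `1 × 1` matrix). -/
def posElem (C : ConeFam V) (v : V) : Prop :=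
  (Matrix.of (fun _ _ => v) : Matrix (Fin 1) (Fin 1) V) ∈ C 1

/-- A state: a unital positive linear functional. -/
def osState (C : ConeFam V) (e : V) (f : Module.Dual ℂ V) : Prop :=
  f e = 1 ∧ ∀ v, posElem C v → 0 ≤ f v

/-- A faithful state. -/
def osFaithfulState (C : ConeFam V) (e : V) (f : Module.Dual ℂ V) : Prop :=
  osState C e f ∧ ∀ v, posElem C v → f v = 0 → v = 0

end Maps

section Dual
variable {V : Type*} [AddCommGroup V] [Module ℂ V]

/-- Flatten a matrix of scalar matrices to a scalar matrix over the product index. -/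
def blockify {n : ℕ} {ι : Type*} (M : Matrix (Fin n) (Fin n) (Matrix ι ι ℂ)) :
    Matrix (Fin n × ι) (Fin n × ι) ℂ :=
  Matrix.of fun p q => M p.1 q.1 p.2 q.2

/-- The matrix-valued map associated with a matrix of functionals. -/
def matValued {n : ℕ} (F : Matrix (Fin n) (Fin n) (Module.Dual ℂ V)) :
    V →ₗ[ℂ] Matrix (Fin n) (Fin n) ℂ where
  toFun v := Matrix.of fun i j => F i j v
  map_add' a b := by ext i j; simp
  map_smul' c a := by ext i j; simp

/-- Complete positivity of a map into a matrix algebra `Mₖ(ℂ)`. -/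
def CPIntoMat (C : ConeFam V) {k : ℕ} (φ : V →ₗ[ℂ] Matrix (Fin k) (Fin k) ℂ) : Prop :=
  ∀ (n : ℕ), ∀ M ∈ C n, (blockify (mmap φ M)).PosSemidef

/-- The dual matrix ordering on `Sᵈ`: a matrix of functionals is positive iff the
associated matrix-valued map is completely positive. -/
def osDualCone (C : ConeFam V) : ConeFam (Module.Dual ℂ V) :=
  fun _ => { F | CPIntoMat C (matValued F) }

/-- The induced (subsystem) matrix ordering on a subspace. -/
def osSubCone (C : ConeFam V) (S₀ : Submodule ℂ V) : ConeFam S₀ :=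
  fun n => { M | mmap S₀.subtype M ∈ C n }

end Dual

/-- A null subspace: a `*`-closed subspace containing no nonzero positive element. -/
def IsNullSubspace {V : Type*} [AddCommGroup V] [Module ℂ V] [StarAddMonoid V]
    (C : ConeFam V) (J : Submodule ℂ V) : Prop :=
  (∀ v ∈ J, star v ∈ J) ∧ ∀ v ∈ J, posElem C v → v = 0

/-- The canonical involution on the dual space: `f⋆ (s) = conj (f (s⋆))`. -/
def dstar {V : Type*} [AddCommGroup V] [Module ℂ V] [StarAddMonoid V] [StarModule ℂ V]
    (f : Module.Dual ℂ V) : Module.Dual ℂ V where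
  toFun v := starRingEnd ℂ (f (star v))
  map_add' a b := by simp
  map_smul' c a := by
    simp only [star_smul, LinearMap.map_smul, smul_eq_mul, map_mul, RingHom.id_apply,
      starRingEnd_apply, star_star]

section TensorDefs
variable {V W : Type*} [AddCommGroup V] [Module ℂ V] [AddCommGroup W] [Module ℂ W]

/-- Kronecker product of scalar matrices. -/
def osKron {k m : ℕ} (X : Matrix (Fin k) (Fin k) ℂ) (Y : Matrix (Fin m) (Fin m) ℂ) :
    Matrix (Fin k × Fin m) (Fin k × Fin m) ℂ :=
  Matrix.of fun p q => X p.1 q.1 * Y p.2 q.2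

/-- The map `φ ⊗ ψ : V ⊗ W → M_k ⊗ M_m = M_{km}`. -/
def osFuse {k m : ℕ} (φ : V →ₗ[ℂ] Matrix (Fin k) (Fin k) ℂ)
    (ψ : W →ₗ[ℂ] Matrix (Fin m) (Fin m) ℂ) :
    V ⊗[ℂ] W →ₗ[ℂ] Matrix (Fin k × Fin m) (Fin k × Fin m) ℂ :=
  TensorProduct.lift (LinearMap.mk₂ ℂ (fun v w => osKron (φ v) (ψ w))
    (fun v v' w => by ext p q; simp [osKron, add_mul])
    (fun c v w => by ext p q; simp [osKron, smul_eq_mul]; ring)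
    (fun v w w' => by ext p q; simp [osKron, mul_add])
    (fun c v w => by ext p q; simp [osKron, smul_eq_mul]; ring))

/-- The minimal operator system tensor cone. -/
def osMin (C : ConeFam V) (e : V) (D : ConeFam W) (f : W) : ConeFam (V ⊗[ℂ] W) :=
  fun n => { U | ∀ (k m : ℕ) (φ : V →ₗ[ℂ] Matrix (Fin k) (Fin k) ℂ)
      (ψ : W →ₗ[ℂ] Matrix (Fin m) (Fin m) ℂ),
      CPIntoMat C φ → φ e = 1 → CPIntoMat D ψ → ψ f = 1 →
      (blockify (mmap (osFuse φ ψ) U)).PosSemidef }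

/-- The elementary tensor `P ⊗ Q` of a `V`-valued and a `W`-valued matrix. -/
def tensorElemMat {k m : ℕ} (P : Matrix (Fin k) (Fin k) V) (Q : Matrix (Fin m) (Fin m) W) :
    Matrix (Fin (k * m)) (Fin (k * m)) (V ⊗[ℂ] W) :=
  Matrix.of fun i j =>
    P (finProdFinEquiv.symm i).1 (finProdFinEquiv.symm j).1 ⊗ₜ[ℂ]
      Q (finProdFinEquiv.symm i).2 (finProdFinEquiv.symm j).2

/-- The cones `Dₙ^max` of the maximal tensor product. -/
def osMaxD (C : ConeFam V) (D : ConeFam W) : ConeFam (V ⊗[ℂ] W) :=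
  fun n => { U | ∃ (k m : ℕ) (P : Matrix (Fin k) (Fin k) V) (Q : Matrix (Fin m) (Fin m) W)
      (A : Matrix (Fin (k * m)) (Fin n) ℂ),
      P ∈ C k ∧ Q ∈ D m ∧ U = matCongr A (tensorElemMat P Q) }

/-- The maximal operator system tensor cone (Archimedeanization of `Dₙ^max`). -/
def osMax (C : ConeFam V) (e : V) (D : ConeFam W) (f : W) : ConeFam (V ⊗[ℂ] W) :=
  fun n => { U | ∀ ε : ℝ, 0 < ε → (ε : ℂ) • unitMat (e ⊗ₜ[ℂ] f) n + U ∈ osMaxD C D n }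

end TensorDefs

/-- The canonical matrix ordering of a C*-algebra: `M ≥ 0` iff `M = N⋆ N`. -/
def cstarPos (A : Type*) [Ring A] [StarRing A] [Algebra ℂ A] : ConeFam A :=
  fun n => { M | ∃ N : Matrix (Fin n) (Fin n) A, M = N.conjTranspose * N }

/-- The (local) lifting property of a finite dimensional operator system: every ucp map
into a quotient C*-algebra `A/I` (presented by a surjective unital `*`-homomorphism)
admits a completely positive lift. -/
def osLiftingProperty {V : Type*} [AddCommGroup V] [Module ℂ V] (C : ConeFam V) (e : V) :
    Prop :=
  ∀ (A B : Type) [CStarAlgebra A] [CStarAlgebra B] (q : A →⋆ₐ[ℂ] B),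
    Function.Surjective (⇑q) →
    ∀ φ : V →ₗ[ℂ] B, osUCP C e (cstarPos B) 1 φ →
      ∃ ψ : V →ₗ[ℂ] A, osCP C (cstarPos A) ψ ∧ q.toAlgHom.toLinearMap ∘ₗ ψ = φ

/-- Exactness of a (finite dimensional) operator system: for every quotient of C*-algebras
the natural map `(S ⊗_min A)/(S ⊗ I) → S ⊗_min (A/I)` is a complete order isomorphism. -/
def osExact {V : Type*} [AddCommGroup V] [Module ℂ V] (C : ConeFam V) (e : V) : Prop :=
  ∀ (A B : Type) [CStarAlgebra A] [CStarAlgebra B] (q : A →⋆ₐ[ℂ] B),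
    Function.Surjective (⇑q) →
    ∀ (n : ℕ) (U : Matrix (Fin n) (Fin n) (V ⊗[ℂ] B)),
      U ∈ osMin C e (cstarPos B) (1 : B) n ↔
        ∀ ε : ℝ, 0 < ε → ∃ P ∈ osMin C e (cstarPos A) (1 : A) n,
          mmap (LinearMap.lTensor V q.toAlgHom.toLinearMap) P
            = U + (ε : ℂ) • unitMat (e ⊗ₜ[ℂ] (1 : B)) n

/-- Kirchberg's local lifting property (LLP) of a unital C*-algebra. -/
def cstarLLP (U : Type*) [CStarAlgebra U] : Prop :=
  ∀ (A B : Type) [CStarAlgebra A] [CStarAlgebra B] (q : A →⋆ₐ[ℂ] B),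
    Function.Surjective (⇑q) →
    ∀ (θ : U →ₗ[ℂ] B), osUCP (cstarPos U) 1 (cstarPos B) 1 θ →
    ∀ (F : Submodule ℂ U), FiniteDimensional ℂ F → (∀ x ∈ F, star x ∈ F) →
    ∀ (h1 : (1 : U) ∈ F),
      ∃ ψ : (F : Type _) →ₗ[ℂ] A,
        osUCP (osSubCone (cstarPos U) F) ⟨1, h1⟩ (cstarPos A) 1 ψ ∧
        q.toAlgHom.toLinearMap ∘ₗ ψ = θ ∘ₗ F.subtype

end

/-!
Write `⟨F, P⟩ = ∑ᵢⱼ Fᵢⱼ (Pᵢⱼ)` (`Matrix.liftLinear`) for the pairing of `Mₖ(Vᵈ)` with `Mₖ(V)`.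
Testing the block matrix `[Fₐ_b (Mᵢⱼ)]` against a vector `v` is pairing `F` with the congruence
`v⋆ M v`, so `F` is positive in `Mₖ(Sᵈ)` iff `⟨F, P⟩ ≥ 0` for every positive `P ∈ Mₖ(S)`. As
`⟨φᵈ⁽ᵏ⁾ F, P⟩ = ⟨F, φ⁽ᵏ⁾ P⟩`, `k`-positivity of `φ` transfers to `φᵈ` at once.

Conversely, let `P ∈ Mₖ(S)` be positive and suppose `ε eₖ + φ⁽ᵏ⁾ P` is not positive for some
`ε > 0`, where `eₖ = diag (e, …, e)`. The M. Riesz extension theorem, applied to real and imaginary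
parts, gives a functional `L` on `Mₖ(T)`, nonnegative on the positive cone, with
`L (ε eₖ + φ⁽ᵏ⁾ P) ∉ [0, ∞)`. But `L` is a positive element of `Mₖ(Tᵈ)`, so
`L (φ⁽ᵏ⁾ P) = ⟨φᵈ⁽ᵏ⁾ L, P⟩ ≥ 0`, a contradiction. The Archimedean property then makes `φ⁽ᵏ⁾ P`
positive.
-/

open ComplexStarModule Matrix

section ExtendRCLike

variable {A : Type*} [AddCommGroup A] [Module ℂ A] [StarAddMonoid A] [StarModule ℂ A]
  {g : Module.Dual ℝ A}

theorem Module.Dual.extendRCLike_apply_eq_realPart_add_imaginaryPart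
    (hg : ∀ Y, g Y = g (ℜ Y)) (Y : A) :
    (g.extendRCLike Y : ℂ) = g (ℜ Y) + Complex.I * g (ℑ Y) := by
  rw [Module.Dual.extendRCLike_apply, hg Y, hg (RCLike.I • Y)]
  simp [RCLike.I_to_complex, realPart_I_smul]

theorem Module.Dual.extendRCLike_nonneg_iff (hg : ∀ Y, g Y = g (ℜ Y)) {Y : A} :
    0 ≤ (g.extendRCLike Y : ℂ) ↔ 0 ≤ g (ℜ Y) ∧ g (ℑ Y) = 0 := by
  rw [g.extendRCLike_apply_eq_realPart_add_imaginaryPart hg, Complex.nonneg_iff]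
  simp [eq_comm]

end ExtendRCLike

theorem Matrix.posSemidef_of_dotProduct_mulVec_nonneg_complex {ι : Type*} [Fintype ι]
    [DecidableEq ι] {A : Matrix ι ι ℂ} (h : ∀ x, 0 ≤ star x ⬝ᵥ (A *ᵥ x)) : A.PosSemidef := by
  rw [← Matrix.isPositive_toEuclideanLin_iff, LinearMap.isPositive_iff_complex]
  intro x
  have hx := h x
  rw [EuclideanSpace.inner_eq_star_dotProduct, Matrix.toLpLin_apply, dotProduct_star,
    dotProduct_comm, (IsSelfAdjoint.of_nonneg hx).star_eq]
  exact ⟨Complex.conj_eq_iff_re.mp (IsSelfAdjoint.of_nonneg hx), (Complex.nonneg_iff.mp hx).1⟩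

section Pairing

variable {V W : Type*} [AddCommGroup V] [Module ℂ V] [AddCommGroup W] [Module ℂ W] {k : ℕ}

theorem dotProduct_blockify_mmap_matValued {n : ℕ}
    (F : Matrix (Fin k) (Fin k) (Module.Dual ℂ V)) (M : Matrix (Fin n) (Fin n) V)
    (v : Fin n × Fin k → ℂ) :
    star v ⬝ᵥ (blockify (mmap (matValued F) M) *ᵥ v) =
      liftLinear ℂ F (matCongr (Matrix.of fun i a => v (i, a)) M) := by
  rw [liftLinear_apply ℂ (F : Fin k → Fin k → V →ₗ[ℂ] ℂ)]
  simp only [dotProduct, mulVec, matCongr, blockify, mmap, matValued, Fintype.sum_prod_type,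
    Finset.mul_sum, of_apply, map_apply, LinearMap.coe_mk, AddHom.coe_mk, map_sum, map_smul,
    smul_eq_mul]
  rw [Finset.sum_comm]
  refine Finset.sum_congr rfl fun a _ => ?_
  rw [Finset.sum_congr rfl fun i _ => Finset.sum_comm, Finset.sum_comm]
  refine Finset.sum_congr rfl fun b _ => Finset.sum_congr rfl fun i _ =>
    Finset.sum_congr rfl fun j _ => ?_
  simp only [Pi.star_apply, RCLike.star_def]
  ring

theorem matCongr_one (P : Matrix (Fin k) (Fin k) V) : matCongr 1 P = P := by
  ext i j
  simp [matCongr, one_apply, ite_smul]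

theorem liftLinear_mmap_dualMap (φ : V →ₗ[ℂ] W) (F : Matrix (Fin k) (Fin k) (Module.Dual ℂ W))
    (P : Matrix (Fin k) (Fin k) V) :
    liftLinear ℂ (mmap φ.dualMap F) P = liftLinear ℂ F (mmap φ P) :=
  (liftLinear_apply ℂ _ P).trans (liftLinear_apply ℂ F _).symm

end Pairing

namespace OSStruct

variable {W : Type*} [AddCommGroup W] [Module ℂ W] [StarAddMonoid W] [StarModule ℂ W]
  (T : OSStruct W) {n : ℕ}

local notation "𝕄" => Matrix (Fin n) (Fin n) W

theorem mem_osDualCone_iff {k : ℕ} {F : Matrix (Fin k) (Fin k) (Module.Dual ℂ W)} :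
    F ∈ osDualCone T.pos k ↔ ∀ P ∈ T.pos k, 0 ≤ liftLinear ℂ F P := by
  refine ⟨fun hF P hP => ?_, fun hF m M hM => ?_⟩
  · have h := (hF k P hP).dotProduct_mulVec_nonneg fun p => (1 : Matrix (Fin k) (Fin k) ℂ) p.1 p.2
    rw [dotProduct_blockify_mmap_matValued] at h
    rwa [← matCongr_one P]
  · refine Matrix.posSemidef_of_dotProduct_mulVec_nonneg_complex fun v => ?_
    rw [dotProduct_blockify_mmap_matValued]
    exact hF _ (T.pos_congr _ hM)

theorem isSelfAdjoint_unitMat : IsSelfAdjoint (unitMat T.unit n) := by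
  ext i j
  by_cases h : i = j
  · subst h; simp [unitMat, T.unit_sa]
  · simp [unitMat, h, Ne.symm h]

theorem zero_mem_pos : (0 : 𝕄) ∈ T.pos n := by
  simpa using T.pos_smul 0 le_rfl (T.unit_pos n)

theorem mem_pos_of_smul_unitMat_add_smul_mem {X : 𝕄} (hX : IsSelfAdjoint X) {a t : ℝ}
    (ha : a < 0) (ht : 0 ≤ t) (h : (a : ℂ) • unitMat T.unit n + (t : ℂ) • X ∈ T.pos n) :
    X ∈ T.pos n := by
  obtain ⟨r, hr, hrX⟩ := T.orderUnit X hX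
  have hsum := T.pos_add (T.pos_smul r hr.le h) (T.pos_smul (-a) (by linarith) hrX)
  have hc : 0 < r * t - a := by nlinarith
  have hcancel : (r : ℂ) • ((a : ℂ) • unitMat T.unit n + (t : ℂ) • X) +
      ((-a : ℝ) : ℂ) • ((r : ℂ) • unitMat T.unit n + X) = ((r * t - a : ℝ) : ℂ) • X := by
    push_cast; module
  rw [hcancel] at hsum
  have hX := T.pos_smul (r * t - a)⁻¹ (inv_nonneg.2 hc.le) hsum
  rwa [smul_smul, ← Complex.ofReal_mul, inv_mul_cancel₀ hc.ne', Complex.ofReal_one,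
    one_smul] at hX

/-- The cone generated by the positive matrices, `-X` and the skew-adjoint matrices. -/
def coneAdjoinNeg (X : 𝕄) : PointedCone ℝ 𝕄 where
  carrier := {Y | ∃ t : ℝ, 0 ≤ t ∧ (ℜ Y : 𝕄) + (t : ℂ) • X ∈ T.pos n}
  zero_mem' := ⟨0, le_rfl, by simpa using T.zero_mem_pos⟩
  add_mem' := by
    rintro Y Z ⟨s, hs, hY⟩ ⟨t, ht, hZ⟩
    refine ⟨s + t, add_nonneg hs ht, ?_⟩
    convert T.pos_add hY hZ using 1
    rw [map_add, AddSubgroup.coe_add, Complex.ofReal_add, add_smul]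
    abel
  smul_mem' := by
    rintro ⟨c, hc⟩ Y ⟨t, ht, hY⟩
    refine ⟨c * t, mul_nonneg hc ht, ?_⟩
    convert T.pos_smul c hc hY using 1
    rw [Nonneg.mk_smul, map_smul, selfAdjoint.val_smul, ← Complex.coe_smul, Complex.ofReal_mul,
      smul_add, smul_smul]

theorem mem_coneAdjoinNeg_of_realPart_mem {X Y : 𝕄} (hY : (ℜ Y : 𝕄) ∈ T.pos n) :
    Y ∈ T.coneAdjoinNeg X :=
  ⟨0, le_rfl, by simpa using hY⟩

theorem unitMat_ne_zero_of_not_mem_pos {X : 𝕄} (hX : IsSelfAdjoint X) (hXpos : X ∉ T.pos n) :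
    unitMat T.unit n ≠ 0 := by
  intro h
  obtain ⟨r, -, hr⟩ := T.orderUnit X hX
  rw [h, smul_zero, zero_add] at hr
  exact hXpos hr

theorem nonneg_of_smul_unitMat_mem_coneAdjoinNeg {X : 𝕄} (hX : IsSelfAdjoint X)
    (hXpos : X ∉ T.pos n) {a : ℝ} (h : a • unitMat T.unit n ∈ T.coneAdjoinNeg X) : 0 ≤ a := by
  obtain ⟨t, ht, hat⟩ := h
  by_contra! ha
  rw [map_smul, selfAdjoint.val_smul, T.isSelfAdjoint_unitMat.coe_realPart,
    ← Complex.coe_smul] at hat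
  exact hXpos (T.mem_pos_of_smul_unitMat_add_smul_mem hX ha ht hat)

theorem exists_smul_unitMat_add_mem_coneAdjoinNeg (X Y : 𝕄) :
    ∃ r : ℝ, r • unitMat T.unit n + Y ∈ T.coneAdjoinNeg X := by
  obtain ⟨r, -, hr⟩ := T.orderUnit (ℜ Y : 𝕄) (ℜ Y).2
  refine ⟨r, T.mem_coneAdjoinNeg_of_realPart_mem ?_⟩
  rwa [map_add, map_smul, AddSubgroup.coe_add, selfAdjoint.val_smul,
    T.isSelfAdjoint_unitMat.coe_realPart, ← Complex.coe_smul]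

/-- M. Riesz extension of `r U ↦ r` from `ℝ U`: the cone meets `ℝ U` only in `ℝ≥0 U` since
`X ∉ pos`, and `ℝ U + cone` is everything since `U` is an order unit. -/
theorem exists_realFunctional_unitMat_eq_one {X : 𝕄} (hX : IsSelfAdjoint X)
    (hXpos : X ∉ T.pos n) :
    ∃ g : Module.Dual ℝ 𝕄, g (unitMat T.unit n) = 1 ∧ ∀ Y ∈ T.coneAdjoinNeg X, 0 ≤ g Y := by
  let f := LinearPMap.mkSpanSingleton (σ := RingHom.id ℝ) (unitMat T.unit n) (1 : ℝ)
    (T.unitMat_ne_zero_of_not_mem_pos hX hXpos)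
  obtain ⟨g, hgf, hg_nonneg⟩ := riesz_extension (T.coneAdjoinNeg X) f
    (by
      rintro ⟨x, hx⟩ hxX
      obtain ⟨a, rfl⟩ := Submodule.mem_span_singleton.1 hx
      rw [LinearPMap.mkSpanSingleton'_apply, smul_eq_mul, mul_one]
      exact T.nonneg_of_smul_unitMat_mem_coneAdjoinNeg hX hXpos hxX)
    (fun Y => by
      obtain ⟨r, hr⟩ := T.exists_smul_unitMat_add_mem_coneAdjoinNeg X Y
      exact ⟨⟨_, Submodule.smul_mem _ r (Submodule.mem_span_singleton_self _)⟩, hr⟩)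
  exact ⟨g, (hgf ⟨_, Submodule.mem_span_singleton_self _⟩).trans
    (LinearPMap.mkSpanSingleton'_apply_self _ _ _ _), hg_nonneg⟩

theorem exists_realFunctional_lt_zero {X : 𝕄} (hX : IsSelfAdjoint X) (hXpos : X ∉ T.pos n) :
    ∃ g : Module.Dual ℝ 𝕄, (∀ Y ∈ T.pos n, 0 ≤ g Y) ∧ (∀ Y, g Y = g (ℜ Y)) ∧ g X < 0 := by
  obtain ⟨ε, hε, hεX⟩ : ∃ ε : ℝ, 0 < ε ∧ (ε : ℂ) • unitMat T.unit n + X ∉ T.pos n := by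
    by_contra! h
    exact hXpos (T.archimedean X h)
  have hεX' : IsSelfAdjoint ((ε : ℂ) • unitMat T.unit n + X) :=
    (IsSelfAdjoint.smul (Complex.conj_ofReal ε) T.isSelfAdjoint_unitMat).add hX
  obtain ⟨g, hgU, hg_nonneg⟩ := T.exists_realFunctional_unitMat_eq_one hεX' hεX
  have hre_zero : ∀ Y, (ℜ Y : 𝕄) = 0 → 0 ≤ g Y := fun Y hY =>
    hg_nonneg Y (T.mem_coneAdjoinNeg_of_realPart_mem (by rw [hY]; exact T.zero_mem_pos))
  refine ⟨g, fun Y hY => hg_nonneg Y (T.mem_coneAdjoinNeg_of_realPart_mem ?_), fun Y => ?_, ?_⟩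
  · rwa [IsSelfAdjoint.coe_realPart (T.pos_sa hY)]
  · have h₁ := hre_zero (Y - ℜ Y) (by simp)
    have h₂ := hre_zero (ℜ Y - Y) (by simp)
    rw [map_sub] at h₁ h₂
    linarith
  · have h := hg_nonneg (-((ε : ℂ) • unitMat T.unit n + X)) ⟨1, zero_le_one, by
      rw [map_neg, AddSubgroup.coe_neg, hεX'.coe_realPart, Complex.ofReal_one, one_smul,
        neg_add_cancel]
      exact T.zero_mem_pos⟩
    rw [map_neg, map_add, Complex.coe_smul, map_smul, hgU, smul_eq_mul, mul_one] at h
    linarith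

theorem exists_posFunctional_not_nonneg {X : 𝕄} (hX : X ∉ T.pos n) :
    ∃ L : 𝕄 →ₗ[ℂ] ℂ, (∀ Y ∈ T.pos n, 0 ≤ L Y) ∧ ¬ 0 ≤ L X := by
  suffices ∃ g : Module.Dual ℝ 𝕄, (∀ Y ∈ T.pos n, 0 ≤ g Y) ∧ (∀ Y, g Y = g (ℜ Y)) ∧
      (g (ℜ X) < 0 ∨ g (ℑ X) ≠ 0) by
    obtain ⟨g, hg_nonneg, hg, hgX⟩ := this
    refine ⟨g.extendRCLike, fun Y hY => ?_, fun hLX => ?_⟩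
    · have hY' : IsSelfAdjoint Y := T.pos_sa hY
      rw [Module.Dual.extendRCLike_nonneg_iff hg, hY'.coe_realPart, hY'.imaginaryPart]
      exact ⟨hg_nonneg Y hY, map_zero g⟩
    · rw [Module.Dual.extendRCLike_nonneg_iff hg] at hLX
      rcases hgX with h | h
      · exact h.not_ge hLX.1
      · exact h hLX.2
  by_cases hre : (ℜ X : 𝕄) ∈ T.pos n
  · have him : (ℑ X : 𝕄) ≠ 0 := by
      intro h
      rw [← realPart_add_I_smul_imaginaryPart X, h, smul_zero, add_zero] at hX
      exact hX hre
    obtain h | h : (ℑ X : 𝕄) ∉ T.pos n ∨ -(ℑ X : 𝕄) ∉ T.pos n := by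
      by_contra! h
      exact him (T.pos_strict h.1 h.2)
    · obtain ⟨g, hg_nonneg, hg, hgX⟩ := T.exists_realFunctional_lt_zero (ℑ X).2 h
      exact ⟨g, hg_nonneg, hg, Or.inr hgX.ne⟩
    · obtain ⟨g, hg_nonneg, hg, hgX⟩ := T.exists_realFunctional_lt_zero (ℑ X).2.neg h
      rw [map_neg, neg_lt_zero] at hgX
      exact ⟨g, hg_nonneg, hg, Or.inr hgX.ne'⟩
  · obtain ⟨g, hg_nonneg, hg, hgX⟩ := T.exists_realFunctional_lt_zero (ℜ X).2 hre
    exact ⟨g, hg_nonneg, hg, Or.inl hgX⟩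

end OSStruct

/-- A linear map between operator systems is `k`-positive iff its
Banach-space adjoint is `k`-positive for the dual matrix orderings. -/
theorem statement0 {V W : Type} [AddCommGroup V] [Module ℂ V] [StarAddMonoid V] [StarModule ℂ V] [AddCommGroup W] [Module ℂ W] [StarAddMonoid W] [StarModule ℂ W]
    (S : OSStruct V) (T : OSStruct W) (k : ℕ) (φ : V →ₗ[ℂ] W) :
    osKPos S.pos T.pos k φ ↔
      osKPos (osDualCone T.pos) (osDualCone S.pos) k φ.dualMap := by
  refine ⟨fun hφ F hF => ?_, fun hφd M hM => ?_⟩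
  · rw [S.mem_osDualCone_iff]
    intro P hP
    rw [liftLinear_mmap_dualMap]
    exact T.mem_osDualCone_iff.1 hF _ (hφ P hP)
  · refine T.archimedean _ fun ε hε => ?_
    by_contra hX
    obtain ⟨L, hL_nonneg, hLX⟩ := T.exists_posFunctional_not_nonneg hX
    let G : Matrix (Fin k) (Fin k) (Module.Dual ℂ W) := (liftLinear ℂ).symm L
    have hG : liftLinear ℂ G = L := (liftLinear ℂ).apply_symm_apply L
    have hLφM : 0 ≤ L (mmap φ M) := by
      have h := S.mem_osDualCone_iff.1 (hφd G (T.mem_osDualCone_iff.2 (hG ▸ hL_nonneg))) M hM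
      rwa [liftLinear_mmap_dualMap, hG] at h
    apply hLX
    rw [map_add, map_smul, smul_eq_mul]
    exact add_nonneg (mul_nonneg (Complex.zero_le_real.2 hε.le) (hL_nonneg _ (T.unit_pos k)))
      hLφM
end

section
/- Let A be a unital C*-algebra and y ∈ A a self-adjoint element that is neither positive nor negative, with Jordan decomposition y = y₁ − y₂ (y₁, y₂ ≥ 0, y₁y₂ = 0, both nonzero). If x is self-adjoint and for every ε > 0 there exists a real α with x + αy + εe ≥ 0, then there exists a real α₀ with x + α₀y ≥ 0. -/
open scoped ComplexOrder TensorProduct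

theorem aux_bound {A : Type*} [CStarAlgebra A] [PartialOrder A] [StarOrderedRing A]
    {z b : A} (hb : 0 ≤ b) (hbne : b ≠ 0) {β : ℝ} (hβ : 0 ≤ β)
    (hpos : β • b ^ 3 ≤ b * z * b) : β * ‖b‖ ≤ ‖z‖ := by
  have hbsa : star b = b := (IsSelfAdjoint.of_nonneg hb).star_eq
  have hbpos : (0:ℝ) < ‖b‖ := norm_pos_iff.mpr hbne
  have hb3 : 0 ≤ b ^ 3 := by
    have := star_left_conjugate_nonneg hb b
    rwa [hbsa, show b * b * b = b ^ 3 by rw [pow_succ, pow_two]] at this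
  have h1 : 0 ≤ β • b ^ 3 := smul_nonneg hβ hb3
  have h2 : ‖β • b ^ 3‖ ≤ ‖b * z * b‖ := CStarAlgebra.norm_le_norm_of_nonneg_of_le h1 hpos
  have h3 : ‖β • b ^ 3‖ = β * ‖b ^ 3‖ := by
    rw [norm_smul, Real.norm_of_nonneg hβ]
  have h4 : ‖b * z * b‖ ≤ ‖b‖ * ‖z‖ * ‖b‖ :=
    (norm_mul_le _ _).trans (by gcongr; exact norm_mul_le _ _)
  have hsq : ‖b ^ 2‖ = ‖b‖ ^ 2 := by
    calc ‖b ^ 2‖ = ‖star b * b‖ := by rw [hbsa, pow_two]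
    _ = ‖b‖ * ‖b‖ := CStarRing.norm_star_mul_self
    _ = ‖b‖ ^ 2 := (pow_two _).symm
  have h4sq : ‖b ^ 4‖ = ‖b‖ ^ 4 := by
    have hb4 : b ^ 4 = star (b ^ 2) * b ^ 2 := by
      rw [star_pow, hbsa, ← pow_add]
    rw [hb4, CStarRing.norm_star_mul_self, hsq]; ring
  have hcube : ‖b‖ ^ 3 ≤ ‖b ^ 3‖ := by
    have h5 : ‖b ^ 4‖ ≤ ‖b‖ * ‖b ^ 3‖ := by
      rw [show b ^ 4 = b * b ^ 3 from (pow_succ' b 3)]; exact norm_mul_le _ _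
    rw [h4sq] at h5
    nlinarith [norm_nonneg (b ^ 3)]
  have h6 : β * ‖b‖ * ‖b‖ ^ 2 ≤ ‖z‖ * ‖b‖ ^ 2 := by
    nlinarith [mul_le_mul_of_nonneg_left hcube hβ]
  exact le_of_mul_le_mul_right h6 (by positivity)

/-- If `y` is selfadjoint and neither positive nor negative in a unital
C*-algebra, with Jordan decomposition `y = y₁ - y₂`, and the selfadjoint `x` satisfies
`x + α y + ε e ≥ 0` for some real `α` for every `ε > 0`, then `x + α₀ y ≥ 0` for some
real `α₀`. -/
theorem statement1 {A : Type*} [CStarAlgebra A] [PartialOrder A] [StarOrderedRing A]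
    {x y y₁ y₂ : A} (hx : IsSelfAdjoint x) (hy : IsSelfAdjoint y)
    (hynp : ¬0 ≤ y) (hynn : ¬y ≤ 0)
    (h₁ : 0 ≤ y₁) (h₂ : 0 ≤ y₂) (hJ : y = y₁ - y₂) (horth : y₁ * y₂ = 0)
    (hy₁ : y₁ ≠ 0) (hy₂ : y₂ ≠ 0)
    (h : ∀ ε : ℝ, 0 < ε → ∃ α : ℝ, 0 ≤ x + α • y + ε • (1 : A)) :
    ∃ α₀ : ℝ, 0 ≤ x + α₀ • y := by
  have hy₁sa : star y₁ = y₁ := (IsSelfAdjoint.of_nonneg h₁).star_eq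
  have hy₂sa : star y₂ = y₂ := (IsSelfAdjoint.of_nonneg h₂).star_eq
  have horth' : y₂ * y₁ = 0 := by
    have := congrArg star horth
    rwa [star_mul, hy₁sa, hy₂sa, star_zero] at this
  have h₁pos : (0:ℝ) < ‖y₁‖ := norm_pos_iff.mpr hy₁
  have h₂pos : (0:ℝ) < ‖y₂‖ := norm_pos_iff.mpr hy₂
  have hchoice : ∀ n : ℕ, ∃ α : ℝ, 0 ≤ x + α • y + (1/(n+1) : ℝ) • (1:A) :=
    fun n => h _ (by positivity)
  choose f hf using hchoice
  -- conjugation identities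
  have hyy₂ : y₂ * y * y₂ = -(y₂ ^ 3) := by
    rw [hJ, mul_sub, sub_mul, horth', zero_mul, zero_sub,
      show y₂ * y₂ * y₂ = y₂ ^ 3 by rw [pow_succ, pow_two]]
  have hyy₁ : y₁ * y * y₁ = y₁ ^ 3 := by
    rw [hJ, mul_sub, sub_mul, horth, zero_mul,
      show y₁ * y₁ * y₁ = y₁ ^ 3 by rw [pow_succ, pow_two], sub_zero]
  have hid₂ : ∀ α ε : ℝ,
      y₂ * (x + α • y + ε • (1:A)) * y₂ = y₂ * (x + ε • 1) * y₂ - α • y₂ ^ 3 := by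
    intro α ε
    simp only [mul_add, add_mul, mul_smul_comm, smul_mul_assoc, mul_one, hyy₂, smul_neg]
    abel
  have hid₁ : ∀ α ε : ℝ,
      y₁ * (x + α • y + ε • (1:A)) * y₁ = y₁ * (x + ε • 1) * y₁ + α • y₁ ^ 3 := by
    intro α ε
    simp only [mul_add, add_mul, mul_smul_comm, smul_mul_assoc, mul_one, hyy₁]
    abel
  have hε1 : ∀ n : ℕ, (1/(n+1) : ℝ) ≤ 1 := by
    intro n
    rw [div_le_one (by positivity)]
    exact le_add_of_nonneg_left (Nat.cast_nonneg n)
  have hεnn : ∀ n : ℕ, (0:ℝ) ≤ 1/(n+1) := fun n => by positivity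
  have : Nontrivial A := ⟨⟨y₁, 0, hy₁⟩⟩
  have hnormz : ∀ n : ℕ, ‖x + (1/(n+1):ℝ) • (1:A)‖ ≤ ‖x‖ + 1 := by
    intro n
    refine (norm_add_le _ _).trans ?_
    have h7 : ‖(1/(n+1):ℝ) • (1:A)‖ ≤ 1 := by
      rw [norm_smul, Real.norm_of_nonneg (hεnn n), norm_one, mul_one]
      exact hε1 n
    linarith only [h7]
  -- upper bound
  have hub : ∀ n, f n ≤ (‖x‖ + 1) / ‖y₂‖ := by
    intro n
    rcases le_or_gt (f n) 0 with h0 | h0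
    · exact h0.trans (by positivity)
    · have hc : 0 ≤ y₂ * (x + f n • y + (1/(n+1):ℝ) • 1) * y₂ := by
        have := star_left_conjugate_nonneg (hf n) y₂
        rwa [hy₂sa] at this
      rw [hid₂ (f n) _, sub_nonneg] at hc
      have hb := aux_bound h₂ hy₂ h0.le hc
      rw [le_div_iff₀ h₂pos]
      exact hb.trans (hnormz n)
  -- lower bound
  have hlb : ∀ n, -((‖x‖ + 1) / ‖y₁‖) ≤ f n := by
    intro n
    rcases le_or_gt 0 (f n) with h0 | h0
    · exact le_trans (neg_nonpos.mpr (by positivity)) h0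
    · have hc : 0 ≤ y₁ * (x + f n • y + (1/(n+1):ℝ) • 1) * y₁ := by
        have := star_left_conjugate_nonneg (hf n) y₁
        rwa [hy₁sa] at this
      rw [hid₁ (f n) _] at hc
      have hc' : (-(f n)) • y₁ ^ 3 ≤ y₁ * (x + (1/(n+1):ℝ) • 1) * y₁ := by
        rw [neg_smul]
        exact neg_le_iff_add_nonneg.mpr hc
      have hb := aux_bound h₁ hy₁ (neg_nonneg.mpr h0.le) hc'
      have hb' := hb.trans (hnormz n)
      rw [neg_le, le_div_iff₀ h₁pos]
      exact hb'
  -- Bolzano–Weierstrass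
  have hmem : ∀ n, f n ∈ Set.Icc (-((‖x‖ + 1) / ‖y₁‖)) ((‖x‖ + 1) / ‖y₂‖) :=
    fun n => ⟨hlb n, hub n⟩
  obtain ⟨α₀, -, φ, hφ, hconv⟩ :=
    tendsto_subseq_of_bounded (Metric.isBounded_Icc _ _) hmem
  refine ⟨α₀, ?_⟩
  have hεt : Filter.Tendsto (fun n : ℕ => (1/(φ n + 1) : ℝ)) Filter.atTop (nhds 0) :=
    tendsto_one_div_add_atTop_nhds_zero_nat.comp hφ.tendsto_atTop
  have hlim : Filter.Tendsto (fun n => x + f (φ n) • y + (1/(φ n + 1) : ℝ) • (1:A))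
      Filter.atTop (nhds (x + α₀ • y)) := by
    have ha : Filter.Tendsto (fun n => f (φ n) • y) Filter.atTop (nhds (α₀ • y)) :=
      hconv.smul_const y
    have hb : Filter.Tendsto (fun n => (1/(φ n + 1) : ℝ) • (1:A)) Filter.atTop
        (nhds ((0:ℝ) • (1:A))) := hεt.smul_const 1
    simpa using (ha.const_add x).add hb
  exact CStarAlgebra.isClosed_nonneg.mem_of_tendsto hlim
    (Filter.Eventually.of_forall fun n => hf (φ n))
end

section
/- Let A be a unital C*-algebra, y self-adjoint and neither positive nor negative, and for ε ∈ (0,1] let X_ε = {α ∈ ℝ : x + αy + εe ≥ 0}, where x is a fixed self-adjoint element. Then X₁ is bounded: if y = y₁ − y₂ is the Jordan decomposition and α ∈ X₁, multiplying x + αy + e ≥ 0 by y₂ on both sides yields y₂xy₂ + y₂² ≥ αy₂³, which together with the analogous inequality for y₁ gives upper and lower bounds for α. -/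
open scoped ComplexOrder TensorProduct

lemma cube_ne_zero_aux {A : Type*} [CStarAlgebra A] {a : A} (ha : IsSelfAdjoint a)
    (h : a ≠ 0) : a * a * a ≠ 0 := by
  intro h3
  have hsq : a * a ≠ 0 := by
    intro h2
    apply h
    have : ‖a‖ * ‖a‖ = 0 := by
      rw [← CStarRing.norm_star_mul_self (x := a), ha.star_eq, h2, norm_zero]
    simpa [norm_eq_zero] using mul_self_eq_zero.mp this
  apply hsq
  have h4 : (a * a) * (a * a) = 0 := by
    calc (a * a) * (a * a) = a * (a * a * a) := by noncomm_ring
    _ = 0 := by rw [h3, mul_zero]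
  have hsa2 : IsSelfAdjoint (a * a) := by
    simpa [ha.star_eq] using (IsSelfAdjoint.mul_star_self a)
  have : ‖a * a‖ * ‖a * a‖ = 0 := by
    rw [← CStarRing.norm_star_mul_self (x := a * a), hsa2.star_eq, h4, norm_zero]
  simpa [norm_eq_zero] using mul_self_eq_zero.mp this


/-- With the above data, `X₁ = {α | x + α y + e ≥ 0}` is bounded:
conjugating `x + α y + e ≥ 0` by `y₂` gives `α y₂³ ≤ y₂ x y₂ + y₂²`, and together with the
analogous inequality for `y₁` this bounds `α` above and below. -/
theorem statement2 {A : Type*} [CStarAlgebra A] [PartialOrder A] [StarOrderedRing A]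
    {x y y₁ y₂ : A} (hx : IsSelfAdjoint x) (hy : IsSelfAdjoint y)
    (hynp : ¬0 ≤ y) (hynn : ¬y ≤ 0)
    (h₁ : 0 ≤ y₁) (h₂ : 0 ≤ y₂) (hJ : y = y₁ - y₂) (horth : y₁ * y₂ = 0)
    (hy₁ : y₁ ≠ 0) (hy₂ : y₂ ≠ 0) :
    (∀ α : ℝ, 0 ≤ x + α • y + (1 : A) →
        α • (y₂ * y₂ * y₂) ≤ y₂ * x * y₂ + y₂ * y₂) ∧
      BddAbove {α : ℝ | 0 ≤ x + α • y + (1 : A)} ∧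
      BddBelow {α : ℝ | 0 ≤ x + α • y + (1 : A)} := by
  have h₁sa : IsSelfAdjoint y₁ := .of_nonneg h₁
  have h₂sa : IsSelfAdjoint y₂ := .of_nonneg h₂
  have horth' : y₂ * y₁ = 0 := by
    have := congrArg star horth
    simpa [star_mul, h₁sa.star_eq, h₂sa.star_eq] using this
  have key₂ : ∀ α : ℝ, 0 ≤ x + α • y + (1 : A) →
      α • (y₂ * y₂ * y₂) ≤ y₂ * x * y₂ + y₂ * y₂ := by
    intro α h
    have hc : 0 ≤ star y₂ * (x + α • y + 1) * y₂ := star_left_conjugate_nonneg h y₂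
    rw [h₂sa.star_eq] at hc
    have expand : y₂ * (x + α • y + 1) * y₂
        = y₂ * x * y₂ + y₂ * y₂ - α • (y₂ * y₂ * y₂) := by
      rw [hJ]
      simp only [mul_add, add_mul, mul_sub, sub_mul, mul_one, one_mul,
        mul_smul_comm, smul_mul_assoc, smul_sub, smul_zero, ← mul_assoc, horth', zero_mul]
      abel
    rw [expand] at hc
    exact sub_nonneg.mp hc
  have key₁ : ∀ α : ℝ, 0 ≤ x + α • y + (1 : A) →
      (-α) • (y₁ * y₁ * y₁) ≤ y₁ * x * y₁ + y₁ * y₁ := by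
    intro α h
    have hc : 0 ≤ star y₁ * (x + α • y + 1) * y₁ := star_left_conjugate_nonneg h y₁
    rw [h₁sa.star_eq] at hc
    have expand : y₁ * (x + α • y + 1) * y₁
        = y₁ * x * y₁ + y₁ * y₁ - (-α) • (y₁ * y₁ * y₁) := by
      rw [hJ]
      simp only [mul_add, add_mul, mul_sub, sub_mul, mul_one, one_mul,
        mul_smul_comm, smul_mul_assoc, smul_sub, smul_zero, neg_smul, sub_neg_eq_add,
        ← mul_assoc, horth, zero_mul]
      abel
    rw [expand] at hc
    exact sub_nonneg.mp hc
  refine ⟨key₂, ?_, ?_⟩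
  · -- BddAbove
    have hcube : (0 : A) ≤ y₂ * y₂ * y₂ := by
      simpa [h₂sa.star_eq] using star_left_conjugate_nonneg h₂ y₂
    have hne : y₂ * y₂ * y₂ ≠ 0 := cube_ne_zero_aux h₂sa hy₂
    have hnorm : 0 < ‖y₂ * y₂ * y₂‖ := norm_pos_iff.mpr hne
    refine ⟨max 0 (‖y₂ * x * y₂ + y₂ * y₂‖ / ‖y₂ * y₂ * y₂‖), ?_⟩
    intro α hα
    rcases le_or_gt α 0 with h0 | h0
    · exact h0.trans (le_max_left _ _)
    · refine le_trans ?_ (le_max_right _ _)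
      rw [le_div_iff₀ hnorm]
      have hle := key₂ α hα
      have hpos : 0 ≤ α • (y₂ * y₂ * y₂) := smul_nonneg h0.le hcube
      have := CStarAlgebra.norm_le_norm_of_nonneg_of_le hpos hle
      calc α * ‖y₂ * y₂ * y₂‖ = ‖α • (y₂ * y₂ * y₂)‖ := by
            rw [norm_smul, Real.norm_eq_abs, abs_of_pos h0]
        _ ≤ _ := this
  · -- BddBelow
    have hcube : (0 : A) ≤ y₁ * y₁ * y₁ := by
      simpa [h₁sa.star_eq] using star_left_conjugate_nonneg h₁ y₁
    have hne : y₁ * y₁ * y₁ ≠ 0 := cube_ne_zero_aux h₁sa hy₁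
    have hnorm : 0 < ‖y₁ * y₁ * y₁‖ := norm_pos_iff.mpr hne
    refine ⟨-(max 0 (‖y₁ * x * y₁ + y₁ * y₁‖ / ‖y₁ * y₁ * y₁‖)), ?_⟩
    intro α hα
    rw [neg_le]
    rcases le_or_gt (-α) 0 with h0 | h0
    · exact h0.trans (le_max_left _ _)
    · refine le_trans ?_ (le_max_right _ _)
      rw [le_div_iff₀ hnorm]
      have hle := key₁ α hα
      have hpos : 0 ≤ (-α) • (y₁ * y₁ * y₁) := smul_nonneg h0.le hcube
      have := CStarAlgebra.norm_le_norm_of_nonneg_of_le hpos hle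
      calc (-α) * ‖y₁ * y₁ * y₁‖ = ‖(-α) • (y₁ * y₁ * y₁)‖ := by
            rw [norm_smul, Real.norm_eq_abs, abs_of_pos h0]
        _ ≤ _ := this
end

section
/- Let φ : S → T be a quotient map between operator systems. Then the dual map φᵈ : Tᵈ → Sᵈ is a complete order embedding: a matrix (g_{ij}) ∈ Mₙ(Tᵈ) is positive whenever (φᵈ(g_{ij})) ∈ Mₙ(Sᵈ) is positive. -/
open scoped ComplexOrder TensorProduct

namespace Matrix

variable {n : Type*} [Fintype n]

theorem isClosed_setOf_posSemidef : IsClosed {A : Matrix n n ℂ | A.PosSemidef} := by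
  simp only [posSemidef_iff_dotProduct_mulVec, Set.ofPred_and, Set.ofPred_forall]
  refine .inter (isClosed_eq (by fun_prop) continuous_id) (isClosed_iInter fun x => ?_)
  exact isClosed_le continuous_const
    (continuous_const.dotProduct (continuous_id.matrix_mulVec continuous_const))

theorem PosSemidef.of_forall_add_smul {A X : Matrix n n ℂ}
    (h : ∀ ε : ℝ, 0 < ε → (A + (ε : ℂ) • X).PosSemidef) : A.PosSemidef := by
  have hlim : Filter.Tendsto (fun ε : ℝ => A + (ε : ℂ) • X) (nhdsWithin 0 (Set.Ioi 0))
      (nhds A) := by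
    have : Continuous fun ε : ℝ => A + (ε : ℂ) • X := by fun_prop
    simpa using (this.tendsto 0).mono_left nhdsWithin_le_nhds
  exact isClosed_setOf_posSemidef.mem_of_tendsto hlim
    (eventually_nhdsWithin_of_forall h)

end Matrix

section DualOrder

variable {V W : Type*} [AddCommGroup V] [Module ℂ V] [AddCommGroup W] [Module ℂ W]

theorem mmap_comp {X : Type*} [AddCommGroup X] [Module ℂ X] {n : ℕ} (g : W →ₗ[ℂ] X)
    (φ : V →ₗ[ℂ] W) (M : Matrix (Fin n) (Fin n) V) :
    mmap (g ∘ₗ φ) M = mmap g (mmap φ M) :=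
  rfl

theorem blockify_mmap_add_smul {n k : ℕ} (g : W →ₗ[ℂ] Matrix (Fin k) (Fin k) ℂ)
    (N U : Matrix (Fin n) (Fin n) W) (c : ℂ) :
    blockify (mmap g (N + c • U)) = blockify (mmap g N) + c • blockify (mmap g U) := by
  ext p q
  simp [blockify, mmap]

theorem matValued_mmap_dualMap {n : ℕ} (φ : V →ₗ[ℂ] W)
    (F : Matrix (Fin n) (Fin n) (Module.Dual ℂ W)) :
    matValued (mmap φ.dualMap F) = matValued F ∘ₗ φ :=
  rfl

theorem CPIntoMat.comp {C : ConeFam V} {D : ConeFam W} {k : ℕ}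
    {g : W →ₗ[ℂ] Matrix (Fin k) (Fin k) ℂ} (hg : CPIntoMat D g) {φ : V →ₗ[ℂ] W}
    (hφ : osCP C D φ) : CPIntoMat C (g ∘ₗ φ) :=
  fun n M hM => hg n _ (hφ n M hM)

/-- Positive matrices over the target lift to positive matrices up to `ε` times the unit,
and `ε → 0` closes the gap because the positive semidefinite cone is closed. -/
theorem CPIntoMat.of_comp_quotientMap {C : ConeFam V} {D : ConeFam W} {f : W} {k : ℕ}
    {φ : V →ₗ[ℂ] W} (hφ : osQuotientMap C D f φ) {g : W →ₗ[ℂ] Matrix (Fin k) (Fin k) ℂ}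
    (hg : CPIntoMat C (g ∘ₗ φ)) : CPIntoMat D g := by
  intro n N hN
  refine Matrix.PosSemidef.of_forall_add_smul (X := blockify (mmap g (unitMat f n)))
    fun ε hε => ?_
  obtain ⟨M, hM, hMN⟩ := hφ.2.2 n N hN ε hε
  simpa only [mmap_comp, hMN, blockify_mmap_add_smul] using hg n M hM

end DualOrder

/-- The dual of an operator system quotient map is a complete order
embedding for the dual matrix orderings. -/
theorem statement5 {V W : Type} [AddCommGroup V] [Module ℂ V] [StarAddMonoid V] [StarModule ℂ V] [AddCommGroup W] [Module ℂ W] [StarAddMonoid W] [StarModule ℂ W]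
    (S : OSStruct V) (T : OSStruct W) (φ : V →ₗ[ℂ] W)
    (hφ : osQuotientMap S.pos T.pos T.unit φ) :
    osCOEmbedding (osDualCone T.pos) (osDualCone S.pos) φ.dualMap := by
  refine ⟨LinearMap.dualMap_injective_of_surjective hφ.1, fun n F hF => ?_, fun n F hF => ?_⟩
  · show CPIntoMat S.pos (matValued (mmap φ.dualMap F))
    rw [matValued_mmap_dualMap]
    exact CPIntoMat.comp hF hφ.2.1
  · refine CPIntoMat.of_comp_quotientMap hφ ?_
    rw [← matValued_mmap_dualMap]
    exact hF
end

section
/- Let S₁, S₂, T₁, T₂ be operator systems and φᵢ : Sᵢ → Tᵢ completely positive (not necessarily unital) maps for i = 1, 2. Then the tensor map φ₁ ⊗ φ₂ : S₁ ⊗_max S₂ → T₁ ⊗_max T₂ is completely positive. -/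
/-!
Write `eᵢ`, `fᵢ` for the units of `Sᵢ`, `Tᵢ`. Applying `φ₁ ⊗ φ₂` entrywise sends `A⋆(P ⊗ Q)A` to
`A⋆(φ₁⁽ᵏ⁾(P) ⊗ φ₂⁽ᵐ⁾(Q))A`, so it maps `Dₙ^max(S₁, S₂)` into `Dₙ^max(T₁, T₂)`. The only defect is
the unit: `ε (e₁ ⊗ e₂)ₙ + U` is sent to `ε (p₁ ⊗ p₂)ₙ + (φ₁ ⊗ φ₂)⁽ⁿ⁾(U)` with `pᵢ = φᵢ(eᵢ) ≥ 0`.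
Pick `qᵢ ≥ 0` with `pᵢ + qᵢ = rᵢ fᵢ`; then `r₁r₂ f₁ ⊗ f₂ - p₁ ⊗ p₂ = p₁ ⊗ q₂ + q₁ ⊗ p₂ + q₁ ⊗ q₂`
is a sum of tensors of positive elements, so its diagonal amplification lies in the convex cone
`Dₙ^max(T₁, T₂)`. Adding it and replacing `ε` by `ε / (r₁r₂)` gives the claim.
-/

open scoped ComplexOrder TensorProduct

section Tensor

variable {V W V' W' : Type*} [AddCommGroup V] [Module ℂ V] [AddCommGroup W] [Module ℂ W]
  [AddCommGroup V'] [Module ℂ V'] [AddCommGroup W'] [Module ℂ W']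

lemma unitMat_add (a b : V) (n : ℕ) : unitMat (a + b) n = unitMat a n + unitMat b n := by
  ext i j; by_cases h : i = j <;> simp [unitMat, h]

lemma unitMat_smul (c : ℂ) (a : V) (n : ℕ) : unitMat (c • a) n = c • unitMat a n := by
  ext i j; by_cases h : i = j <;> simp [unitMat, h]

lemma unitMat_sub (a b : V) (n : ℕ) : unitMat (a - b) n = unitMat a n - unitMat b n := by
  ext i j; by_cases h : i = j <;> simp [unitMat, h]

lemma mmap_add (φ : V →ₗ[ℂ] W) {n : ℕ} (M N : Matrix (Fin n) (Fin n) V) :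
    mmap φ (M + N) = mmap φ M + mmap φ N := by
  ext i j; simp [mmap]

lemma mmap_smul (φ : V →ₗ[ℂ] W) {n : ℕ} (c : ℂ) (M : Matrix (Fin n) (Fin n) V) :
    mmap φ (c • M) = c • mmap φ M := by
  ext i j; simp [mmap]

lemma mmap_unitMat (φ : V →ₗ[ℂ] W) (e : V) (n : ℕ) :
    mmap φ (unitMat e n) = unitMat (φ e) n := by
  ext i j; simp [mmap, unitMat, apply_ite φ]

lemma unitMat_one (v : V) : unitMat v 1 = Matrix.of fun _ _ => v := by
  ext i j; simp [unitMat, Subsingleton.elim i j]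

/-- `matCongr A (tensorElemMat P Q)` with the rows of `A` indexed by `Fin k × Fin m` instead of
`Fin (k * m)`, which keeps block manipulations free of `finProdFinEquiv`. -/
def tensorCongr {k m n : ℕ} (A : Fin k × Fin m → Fin n → ℂ)
    (P : Matrix (Fin k) (Fin k) V) (Q : Matrix (Fin m) (Fin m) W) :
    Matrix (Fin n) (Fin n) (V ⊗[ℂ] W) :=
  Matrix.of fun i j => ∑ a, ∑ c, ∑ b, ∑ d,
    (star (A (a, c) i) * A (b, d) j) • (P a b ⊗ₜ[ℂ] Q c d)

lemma matCongr_tensorElemMat {k m n : ℕ} (A : Matrix (Fin (k * m)) (Fin n) ℂ)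
    (P : Matrix (Fin k) (Fin k) V) (Q : Matrix (Fin m) (Fin m) W) :
    matCongr A (tensorElemMat P Q) = tensorCongr (fun x i => A (finProdFinEquiv x) i) P Q := by
  ext i j
  simp only [matCongr, tensorElemMat, tensorCongr, Matrix.of_apply]
  rw [← finProdFinEquiv.sum_comp, Fintype.sum_prod_type]
  refine Finset.sum_congr rfl fun a _ => Finset.sum_congr rfl fun c _ => ?_
  rw [← finProdFinEquiv.sum_comp, Fintype.sum_prod_type]
  simp only [Equiv.symm_apply_apply]

lemma mem_osMaxD_iff {C : ConeFam V} {D : ConeFam W} {n : ℕ}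
    {U : Matrix (Fin n) (Fin n) (V ⊗[ℂ] W)} :
    U ∈ osMaxD C D n ↔ ∃ (k m : ℕ) (A : Fin k × Fin m → Fin n → ℂ)
      (P : Matrix (Fin k) (Fin k) V) (Q : Matrix (Fin m) (Fin m) W),
      P ∈ C k ∧ Q ∈ D m ∧ U = tensorCongr A P Q := by
  constructor
  · rintro ⟨k, m, P, Q, A, hP, hQ, rfl⟩
    exact ⟨k, m, _, P, Q, hP, hQ, matCongr_tensorElemMat A P Q⟩
  · rintro ⟨k, m, A, P, Q, hP, hQ, rfl⟩
    refine ⟨k, m, P, Q, Matrix.of fun x i => A (finProdFinEquiv.symm x) i, hP, hQ, ?_⟩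
    simp only [matCongr_tensorElemMat, Matrix.of_apply, Equiv.symm_apply_apply]

lemma tensorCongr_mem_osMaxD {C : ConeFam V} {D : ConeFam W} {k m n : ℕ}
    (A : Fin k × Fin m → Fin n → ℂ) {P : Matrix (Fin k) (Fin k) V}
    {Q : Matrix (Fin m) (Fin m) W} (hP : P ∈ C k) (hQ : Q ∈ D m) :
    tensorCongr A P Q ∈ osMaxD C D n :=
  mem_osMaxD_iff.2 ⟨k, m, A, P, Q, hP, hQ, rfl⟩

lemma mmap_map_tensorCongr (φ : V →ₗ[ℂ] V') (ψ : W →ₗ[ℂ] W') {k m n : ℕ}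
    (A : Fin k × Fin m → Fin n → ℂ) (P : Matrix (Fin k) (Fin k) V)
    (Q : Matrix (Fin m) (Fin m) W) :
    mmap (TensorProduct.map φ ψ) (tensorCongr A P Q) = tensorCongr A (mmap φ P) (mmap ψ Q) := by
  ext i j
  simp [mmap, tensorCongr, map_sum]

lemma mmap_map_mem_osMaxD {C : ConeFam V} {D : ConeFam W} {C' : ConeFam V'} {D' : ConeFam W'}
    {φ : V →ₗ[ℂ] V'} {ψ : W →ₗ[ℂ] W'} (hφ : osCP C C' φ) (hψ : osCP D D' ψ) {n : ℕ}
    {U : Matrix (Fin n) (Fin n) (V ⊗[ℂ] W)} (hU : U ∈ osMaxD C D n) :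
    mmap (TensorProduct.map φ ψ) U ∈ osMaxD C' D' n := by
  obtain ⟨k, m, A, P, Q, hP, hQ, rfl⟩ := mem_osMaxD_iff.1 hU
  rw [mmap_map_tensorCongr]
  exact tensorCongr_mem_osMaxD A (hφ k P hP) (hψ m Q hQ)

lemma tensorCongr_fst_unitMat_one {n : ℕ} (P : Matrix (Fin n) (Fin n) V) (q : W) :
    tensorCongr (fun x i => if x.1 = i then 1 else 0) P (unitMat q 1) =
      P.map (· ⊗ₜ[ℂ] q) := by
  ext i j
  simp [tensorCongr, unitMat, Finset.sum_ite_eq']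

lemma tensorCongr_smul_left {k m n : ℕ} (A : Fin k × Fin m → Fin n → ℂ) (c : ℂ)
    (P : Matrix (Fin k) (Fin k) V) (Q : Matrix (Fin m) (Fin m) W) :
    tensorCongr A (c • P) Q = c • tensorCongr A P Q := by
  ext i j
  simp only [tensorCongr, Matrix.of_apply, Matrix.smul_apply, Finset.smul_sum,
    TensorProduct.smul_tmul', smul_comm c]

lemma tensorCongr_add {k₁ k₂ m₁ m₂ n : ℕ} (A₁ : Fin k₁ × Fin m₁ → Fin n → ℂ)
    (A₂ : Fin k₂ × Fin m₂ → Fin n → ℂ) (P₁ : Matrix (Fin k₁) (Fin k₁) V)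
    (P₂ : Matrix (Fin k₂) (Fin k₂) V) (Q₁ : Matrix (Fin m₁) (Fin m₁) W)
    (Q₂ : Matrix (Fin m₂) (Fin m₂) W) :
    tensorCongr A₁ P₁ Q₁ + tensorCongr A₂ P₂ Q₂ =
      tensorCongr (fun x i => Fin.addCases (fun a => Fin.addCases (fun c => A₁ (a, c) i) 0 x.2)
          (fun a => Fin.addCases 0 (fun c => A₂ (a, c) i) x.2) x.1)
        (Matrix.reindex finSumFinEquiv finSumFinEquiv (Matrix.fromBlocks P₁ 0 0 P₂))
        (Matrix.reindex finSumFinEquiv finSumFinEquiv (Matrix.fromBlocks Q₁ 0 0 Q₂)) := by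
  ext i j
  -- `A` only sees the diagonal blocks, where `(P₁ ⊕ P₂) ⊗ (Q₁ ⊕ Q₂)` is `P₁ ⊗ Q₁` or `P₂ ⊗ Q₂`
  simp [tensorCongr, Fin.sum_univ_add, Finset.sum_add_distrib]

end Tensor

namespace OSStruct

variable {V : Type*} [AddCommGroup V] [Module ℂ V] [StarAddMonoid V] [StarModule ℂ V]
  (S : OSStruct V)

lemma zero_mem (n : ℕ) : (0 : Matrix (Fin n) (Fin n) V) ∈ S.pos n := by
  have h0 : matCongr (0 : Matrix (Fin 1) (Fin n) ℂ) (unitMat S.unit 1) = 0 := by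
    ext i j; simp [matCongr]
  simpa [h0] using S.pos_congr (0 : Matrix (Fin 1) (Fin n) ℂ) (S.unit_pos 1)

lemma posElem_unit : posElem S.pos S.unit := by
  simpa [posElem, unitMat_one] using S.unit_pos 1

lemma exists_posElem_smul_unit_sub {p : V} (hp : posElem S.pos p) :
    ∃ r : ℝ, 0 < r ∧ posElem S.pos ((r : ℂ) • S.unit - p) := by
  obtain ⟨r, hr, hmem⟩ := S.orderUnit (-(Matrix.of fun _ _ => p : Matrix (Fin 1) (Fin 1) V))
    (by rw [Matrix.conjTranspose_neg, S.pos_sa hp])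
  refine ⟨r, hr, ?_⟩
  unfold posElem
  convert hmem using 1
  ext i j
  simp [unitMat, Subsingleton.elim i j, sub_eq_add_neg]

lemma unitMat_mem {v : V} (hv : posElem S.pos v) (n : ℕ) : unitMat v n ∈ S.pos n := by
  have hsum : unitMat v n = ∑ t : Fin n,
      matCongr (Matrix.of fun (_ : Fin 1) j => if j = t then 1 else 0)
        (Matrix.of fun _ _ => v) := by
    ext i j
    by_cases h : i = j <;> simp [unitMat, matCongr, Matrix.sum_apply, h]
  rw [hsum]
  exact Finset.sum_induction _ (· ∈ S.pos n) (fun _ _ => S.pos_add) (S.zero_mem n)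
    fun t _ => S.pos_congr _ hv

lemma reindex_fromBlocks_mem {k₁ k₂ : ℕ} {M₁ : Matrix (Fin k₁) (Fin k₁) V}
    {M₂ : Matrix (Fin k₂) (Fin k₂) V} (h₁ : M₁ ∈ S.pos k₁) (h₂ : M₂ ∈ S.pos k₂) :
    Matrix.reindex finSumFinEquiv finSumFinEquiv (Matrix.fromBlocks M₁ 0 0 M₂) ∈
      S.pos (k₁ + k₂) := by
  have hsum : Matrix.reindex finSumFinEquiv finSumFinEquiv (Matrix.fromBlocks M₁ 0 0 M₂) =
      matCongr (Matrix.of fun a i => if finSumFinEquiv.symm i = Sum.inl a then 1 else 0) M₁ +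
      matCongr (Matrix.of fun a i => if finSumFinEquiv.symm i = Sum.inr a then 1 else 0) M₂ := by
    ext x y
    induction x using Fin.addCases <;> induction y using Fin.addCases <;>
      simp [matCongr]
  rw [hsum]
  exact S.pos_add (S.pos_congr _ h₁) (S.pos_congr _ h₂)

end OSStruct

section MaxCone

variable {V W : Type*} [AddCommGroup V] [Module ℂ V] [StarAddMonoid V] [StarModule ℂ V]
  [AddCommGroup W] [Module ℂ W] [StarAddMonoid W] [StarModule ℂ W]
  {S : OSStruct V} {T : OSStruct W}

lemma smul_mem_osMaxD {n : ℕ} {r : ℝ} (hr : 0 ≤ r) {U : Matrix (Fin n) (Fin n) (V ⊗[ℂ] W)}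
    (hU : U ∈ osMaxD S.pos T.pos n) : (r : ℂ) • U ∈ osMaxD S.pos T.pos n := by
  obtain ⟨k, m, A, P, Q, hP, hQ, rfl⟩ := mem_osMaxD_iff.1 hU
  rw [← tensorCongr_smul_left]
  exact tensorCongr_mem_osMaxD A (S.pos_smul r hr hP) hQ

lemma add_mem_osMaxD {n : ℕ} {U₁ U₂ : Matrix (Fin n) (Fin n) (V ⊗[ℂ] W)}
    (hU₁ : U₁ ∈ osMaxD S.pos T.pos n) (hU₂ : U₂ ∈ osMaxD S.pos T.pos n) :
    U₁ + U₂ ∈ osMaxD S.pos T.pos n := by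
  obtain ⟨k₁, m₁, A₁, P₁, Q₁, hP₁, hQ₁, rfl⟩ := mem_osMaxD_iff.1 hU₁
  obtain ⟨k₂, m₂, A₂, P₂, Q₂, hP₂, hQ₂, rfl⟩ := mem_osMaxD_iff.1 hU₂
  rw [tensorCongr_add]
  exact tensorCongr_mem_osMaxD _ (S.reindex_fromBlocks_mem hP₁ hP₂)
    (T.reindex_fromBlocks_mem hQ₁ hQ₂)

lemma unitMat_tmul_mem_osMaxD {p : V} {q : W} (hp : posElem S.pos p) (hq : posElem T.pos q)
    (n : ℕ) : unitMat (p ⊗ₜ[ℂ] q) n ∈ osMaxD S.pos T.pos n := by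
  have h : unitMat (p ⊗ₜ[ℂ] q) n =
      tensorCongr (fun x i => if x.1 = i then 1 else 0) (unitMat p n) (unitMat q 1) := by
    rw [tensorCongr_fst_unitMat_one]
    ext i j
    by_cases hij : i = j <;> simp [unitMat, hij]
  rw [h]
  exact tensorCongr_mem_osMaxD _ (S.unitMat_mem hp n) (T.unitMat_mem hq 1)

lemma exists_unitMat_smul_unit_tmul_sub_mem_osMaxD {p : V} {q : W} (hp : posElem S.pos p)
    (hq : posElem T.pos q) :
    ∃ r : ℝ, 0 < r ∧ ∀ n, unitMat ((r : ℂ) • (S.unit ⊗ₜ[ℂ] T.unit) - p ⊗ₜ[ℂ] q) n ∈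
      osMaxD S.pos T.pos n := by
  obtain ⟨r₁, hr₁, hp'⟩ := S.exists_posElem_smul_unit_sub hp
  obtain ⟨r₂, hr₂, hq'⟩ := T.exists_posElem_smul_unit_sub hq
  refine ⟨r₁ * r₂, mul_pos hr₁ hr₂, fun n => ?_⟩
  have h : (((r₁ * r₂ : ℝ) : ℂ) • (S.unit ⊗ₜ[ℂ] T.unit) - p ⊗ₜ[ℂ] q) =
      p ⊗ₜ[ℂ] ((r₂ : ℂ) • T.unit - q) + ((r₁ : ℂ) • S.unit - p) ⊗ₜ[ℂ] q +
        ((r₁ : ℂ) • S.unit - p) ⊗ₜ[ℂ] ((r₂ : ℂ) • T.unit - q) := by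
    simp only [TensorProduct.tmul_sub, TensorProduct.sub_tmul, TensorProduct.tmul_smul,
      TensorProduct.smul_tmul', smul_sub, smul_smul]
    push_cast
    rw [mul_comm (r₂ : ℂ)]
    abel
  rw [h, unitMat_add, unitMat_add]
  exact add_mem_osMaxD (add_mem_osMaxD (unitMat_tmul_mem_osMaxD hp hq' n)
    (unitMat_tmul_mem_osMaxD hp' hq n)) (unitMat_tmul_mem_osMaxD hp' hq' n)

end MaxCone

/-- The maximal tensor product is functorial for (not necessarily unital)
completely positive maps. -/
theorem statement7 {V₁ V₂ W₁ W₂ : Type} [AddCommGroup V₁] [Module ℂ V₁] [StarAddMonoid V₁] [StarModule ℂ V₁] [AddCommGroup V₂] [Module ℂ V₂] [StarAddMonoid V₂] [StarModule ℂ V₂]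
    [AddCommGroup W₁] [Module ℂ W₁] [StarAddMonoid W₁] [StarModule ℂ W₁] [AddCommGroup W₂] [Module ℂ W₂] [StarAddMonoid W₂] [StarModule ℂ W₂]
    (S₁ : OSStruct V₁) (S₂ : OSStruct V₂) (T₁ : OSStruct W₁) (T₂ : OSStruct W₂)
    (φ₁ : V₁ →ₗ[ℂ] W₁) (φ₂ : V₂ →ₗ[ℂ] W₂)
    (h₁ : osCP S₁.pos T₁.pos φ₁) (h₂ : osCP S₂.pos T₂.pos φ₂) :
    osCP (osMax S₁.pos S₁.unit S₂.pos S₂.unit) (osMax T₁.pos T₁.unit T₂.pos T₂.unit)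
      (TensorProduct.map φ₁ φ₂) := by
  intro n M hM ε hε
  obtain ⟨r, hr, hdom⟩ := exists_unitMat_smul_unit_tmul_sub_mem_osMaxD
    (h₁ 1 _ S₁.posElem_unit) (h₂ 1 _ S₂.posElem_unit)
  have hεr : 0 < ε / r := div_pos hε hr
  have hmap := mmap_map_mem_osMaxD h₁ h₂ (hM (ε / r) hεr)
  rw [mmap_add, mmap_smul, mmap_unitMat, TensorProduct.map_tmul] at hmap
  convert add_mem_osMaxD hmap (smul_mem_osMaxD hεr.le (hdom n)) using 1
  rw [unitMat_sub, unitMat_smul, smul_sub, smul_smul, ← Complex.ofReal_mul,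
    div_mul_cancel₀ ε hr.ne']
  abel
end
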